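/- Let 0 < ε < x, let f_n → f in D[0,∞) with the J₁ topology, where f is continuous, f(0) = x, σ_ε^f = ∞ (i.e. f(s) > ε for all s ≥ 0). Then ∫₀^{σ_ε^{f_n}} f_n⁺(s) ds → ∞ = ∫₀^{σ_ε^f} f⁺(s) ds as n → ∞. -/

import Mathlib

/-!
On `[0, T]` the continuous limit `f` stays above a level strictly larger than `ε`, so by uniform
convergence `f_n > ε` on `[0, T]` for all large `n`. Then `σ_ε^{f_n} ≥ T`, and the integral of
`f_n⁺` up to `σ_ε^{f_n}` is at least `ε T`, which is arbitrarily large.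
-/

open Filter MeasureTheory

/-- The entrance time `σ_ε^f = inf{t ≥ 0 : f(t) ≤ ε}` of `f` into `(-∞, ε]`, valued in
`[0,∞]` (with `inf ∅ = ∞`). -/
noncomputable def entranceTime (ε : ℝ) (f : ℝ → ℝ) : ENNReal :=
  sInf (ENNReal.ofReal '' {s : ℝ | 0 ≤ s ∧ f s ≤ ε})

open Set

theorem TendstoUniformlyOn.eventually_forall_gt_of_isCompact {ι α : Type*} [TopologicalSpace α]
    {F : ι → α → ℝ} {f : α → ℝ} {p : Filter ι} {K : Set α} {c : ℝ}
    (hF : TendstoUniformlyOn F f p K) (hK : IsCompact K) (hf : ContinuousOn f K)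
    (hc : ∀ x ∈ K, c < f x) :
    ∀ᶠ i in p, ∀ x ∈ K, c < F i x := by
  obtain ⟨c', hcc', hc'⟩ := hK.exists_forall_le' hf hc
  filter_upwards [hF.neg.eventually_forall_lt (neg_lt_neg hcc')
    fun x hx => neg_le_neg (hc' x hx)] with i hi x hx
  exact neg_lt_neg_iff.1 (hi x hx)

theorem ofReal_le_entranceTime {ε T : ℝ} {g : ℝ → ℝ} (hg : ∀ s ∈ Icc 0 T, ε < g s) :
    ENNReal.ofReal T ≤ entranceTime ε g := by
  refine le_sInf ?_
  rintro _ ⟨s, ⟨hs0, hsε⟩, rfl⟩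
  by_contra! hsT
  exact hsε.not_gt (hg s ⟨hs0, (ENNReal.ofReal_lt_ofReal_iff'.1 hsT).1.le⟩)

theorem Ico_subset_setOf_lt_entranceTime {ε T : ℝ} {g : ℝ → ℝ}
    (hg : ∀ s ∈ Icc 0 T, ε < g s) :
    Ico 0 T ⊆ {s : ℝ | 0 ≤ s ∧ ENNReal.ofReal s < entranceTime ε g} :=
  fun _ ⟨hs0, hsT⟩ =>
    ⟨hs0, (ENNReal.ofReal_lt_ofReal_iff'.2 ⟨hsT, hs0.trans_lt hsT⟩).trans_le
      (ofReal_le_entranceTime hg)⟩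

theorem ofReal_mul_le_setLIntegral_Ico {a b c : ℝ} {g : ℝ → ℝ} (hc : 0 ≤ c)
    (hg : ∀ s ∈ Ico a b, c ≤ g s) :
    ENNReal.ofReal (c * (b - a)) ≤ ∫⁻ s in Ico a b, ENNReal.ofReal (g s) :=
  calc ENNReal.ofReal (c * (b - a)) = ∫⁻ _ in Ico a b, ENNReal.ofReal c := by
        rw [setLIntegral_const, Real.volume_Ico, ENNReal.ofReal_mul hc]
    _ ≤ ∫⁻ s in Ico a b, ENNReal.ofReal (g s) :=
        setLIntegral_mono' measurableSet_Ico fun s hs => ENNReal.ofReal_le_ofReal (hg s hs)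

theorem integral_up_to_entranceTime_tendsto_top_general
    (ε : ℝ) (hε : 0 < ε)
    (f : ℝ → ℝ) (hf : Continuous f)
    (hfε : ∀ s : ℝ, 0 ≤ s → ε < f s)
    (fs : ℕ → ℝ → ℝ)
    (hconv : ∀ T : ℝ, TendstoUniformlyOn fs f atTop (Set.Icc 0 T)) :
    Tendsto
      (fun n => ∫⁻ s in {s : ℝ | 0 ≤ s ∧ ENNReal.ofReal s < entranceTime ε (fs n)},
        ENNReal.ofReal (fs n s)) atTop (nhds ⊤) := by
  refine ENNReal.tendsto_nhds_top fun M => ?_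
  set T : ℝ := (M + 1) / ε
  have hMT : (M : ℝ) < ε * (T - 0) := by
    rw [sub_zero, mul_div_cancel₀ _ hε.ne']
    linarith
  filter_upwards [(hconv T).eventually_forall_gt_of_isCompact isCompact_Icc hf.continuousOn
    fun s hs => hfε s hs.1] with n hn
  calc (M : ENNReal) < ENNReal.ofReal (ε * (T - 0)) := by
        rwa [← ENNReal.ofReal_natCast,
          ENNReal.ofReal_lt_ofReal_iff ((Nat.cast_nonneg M).trans_lt hMT)]
    _ ≤ ∫⁻ s in Ico 0 T, ENNReal.ofReal (fs n s) :=
        ofReal_mul_le_setLIntegral_Ico hε.le fun s hs => (hn s (Ico_subset_Icc_self hs)).le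
    _ ≤ _ := lintegral_mono_set (Ico_subset_setOf_lt_entranceTime hn)

/-- If `f_n → f` locally uniformly (`J₁` convergence to a continuous limit), `f` is
continuous with `f(0) = x > ε > 0` and `σ_ε^f = ∞` (i.e. `f(s) > ε` for all `s ≥ 0`),
then `∫₀^{σ_ε^{f_n}} f_n⁺(s) ds → ∞ = ∫₀^{σ_ε^f} f⁺(s) ds`. -/
theorem integral_up_to_entranceTime_tendsto_top
    (ε x : ℝ) (hε : 0 < ε) (hεx : ε < x)
    (f : ℝ → ℝ) (hf : Continuous f) (hf0 : f 0 = x)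
    (hfε : ∀ s : ℝ, 0 ≤ s → ε < f s)
    (fs : ℕ → ℝ → ℝ) (hmeas : ∀ n, Measurable (fs n))
    (hconv : ∀ T : ℝ, TendstoUniformlyOn fs f atTop (Set.Icc 0 T)) :
    Tendsto
      (fun n => ∫⁻ s in {s : ℝ | 0 ≤ s ∧ ENNReal.ofReal s < entranceTime ε (fs n)},
        ENNReal.ofReal (fs n s)) atTop (nhds ⊤) :=
  integral_up_to_entranceTime_tendsto_top_general ε hε f hf hfε fs hconv
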